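/- For a rooted tree T with root r, where for each vertex v the relevance probabilities p(u|v) over the tree-neighbors of v form a probability distribution, define graph softmax G(v) for v ≠ r as G(v) = (∏_{j=1}^m p(v_j | v_{j-1})) · p(v_{m-1} | v_m), where (r = v_0, ..., v_m = v) is the root-path of v. Then ∑_{v ≠ r} G(v) = 1, i.e., graph softmax is a probability distribution over the non-root vertices. -/
import Mathlib


open Finset

/-- Tree-neighbors of `v` in the rooted tree encoded by `parent`: its children together
with its parent (when `v` is not the root). -/
def neighbors {V : Type*} [Fintype V] [DecidableEq V] (root : V) (parent : V → V) (v : V) :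
    Finset V :=
  univ.filter (fun u => (parent u = v ∧ u ≠ root) ∨ (u = parent v ∧ v ≠ root))

/-- `∏_{j=1}^{m} p(v_j | v_{j-1})` along the root-path `(root = v_0, …, v_m = v)` of `v`,
where `prob w u` denotes the relevance probability `p(u | w)`. -/
noncomputable def pathProd {V : Type*} (parent : V → V) (depth : V → ℕ)
    (prob : V → V → ℝ) (v : V) : ℝ :=
  ∏ j ∈ Finset.range (depth v), prob (parent^[j + 1] v) (parent^[j] v)

/-- Graph softmax: `G(v) = (∏_{j=1}^m p(v_j | v_{j-1})) · p(v_{m-1} | v_m)`. -/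
noncomputable def gsm {V : Type*} (parent : V → V) (depth : V → ℕ)
    (prob : V → V → ℝ) (v : V) : ℝ :=
  pathProd parent depth prob v * prob v (parent v)

/-- Graph softmax is normalized: it is a probability distribution over the non-root
vertices, i.e. `∑_{v ≠ r} G(v) = 1`. -/
theorem gsm_sum_eq_one {V : Type*} [Fintype V] [DecidableEq V]
    (root : V) (parent : V → V) (depth : V → ℕ) (prob : V → V → ℝ)
    (hcard : 2 ≤ Fintype.card V)
    (hroot : parent root = root) (hd0 : depth root = 0)
    (hd : ∀ v, v ≠ root → depth v = depth (parent v) + 1)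
    (hzero : ∀ v, depth v = 0 → v = root)
    (hnn : ∀ v u, u ∈ neighbors root parent v → 0 ≤ prob v u)
    (hsum : ∀ v, ∑ u ∈ neighbors root parent v, prob v u = 1) :
    ∑ v ∈ univ.filter (fun v => v ≠ root), gsm parent depth prob v = 1 := by
  classical
  set P := pathProd parent depth prob with hP
  have hProot : P root = 1 := by simp [hP, pathProd, hd0]
  have hstep : ∀ v, v ≠ root → P v = P (parent v) * prob (parent v) v := by
    intro v hv
    simp only [hP, pathProd, hd v hv]
    rw [Finset.prod_range_succ']
    simp [Function.iterate_succ_apply]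
  -- children of v (excluding root)
  set C : V → Finset V := fun v => univ.filter (fun u => parent u = v ∧ u ≠ root) with hC
  have hnbr_root : neighbors root parent root = C root := by
    ext u; simp [neighbors, hC]
  have hnbr : ∀ v, v ≠ root → neighbors root parent v = insert (parent v) (C v) := by
    intro v hv
    ext u
    simp only [neighbors, hC, mem_filter, mem_univ, true_and, mem_insert]
    constructor
    · rintro (⟨h1, h2⟩ | ⟨h1, _⟩)
      · exact Or.inr ⟨h1, h2⟩
      · exact Or.inl h1
    · rintro (h | ⟨h1, h2⟩)
      · exact Or.inr ⟨h, hv⟩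
      · exact Or.inl ⟨h1, h2⟩
  have hpnotC : ∀ v, v ≠ root → parent v ∉ C v := by
    intro v hv hmem
    simp only [hC, mem_filter, mem_univ, true_and] at hmem
    have h1 := hd v hv
    have h2 := hd (parent v) hmem.2
    rw [hmem.1] at h2
    omega
  -- gsm v = P v - ∑_{u ∈ C v} P u
  have key : ∀ v, v ≠ root → gsm parent depth prob v = P v - ∑ u ∈ C v, P u := by
    intro v hv
    have h1 := hsum v
    rw [hnbr v hv, Finset.sum_insert (hpnotC v hv)] at h1
    have h2 : ∑ u ∈ C v, P u = ∑ u ∈ C v, P v * prob v u := by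
      apply Finset.sum_congr rfl
      intro u hu
      simp only [hC, mem_filter, mem_univ, true_and] at hu
      rw [hstep u hu.2, hu.1]
    rw [h2, ← Finset.mul_sum]
    have : gsm parent depth prob v = P v * prob v (parent v) := rfl
    rw [this]
    have hpv : prob v (parent v) = 1 - ∑ u ∈ C v, prob v u := by linarith
    rw [hpv]; ring
  rw [Finset.sum_congr rfl (fun v hv => key v (by simpa using hv))]
  rw [Finset.sum_sub_distrib]
  -- the double sum over children
  set s : Finset V := univ.filter (fun u => u ≠ root ∧ parent u ≠ root) with hs
  have hdouble : ∑ v ∈ univ.filter (fun v => v ≠ root), ∑ u ∈ C v, P u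
      = ∑ u ∈ s, P u := by
    have hmap : ∀ u ∈ s, parent u ∈ univ.filter (fun v => v ≠ root) := by
      intro u hu
      simp only [hs, mem_filter, mem_univ, true_and] at hu ⊢
      exact hu.2
    rw [← Finset.sum_fiberwise_of_maps_to hmap P]
    apply Finset.sum_congr rfl
    intro v hv
    simp only [mem_filter, mem_univ, true_and] at hv
    apply Finset.sum_congr _ (fun _ _ => rfl)
    ext u
    simp only [hs, hC, mem_filter, mem_univ, true_and]
    constructor
    · rintro ⟨h1, h2⟩
      refine ⟨⟨h2, ?_⟩, h1⟩
      rw [h1]; exact hv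
    · tauto
  rw [hdouble]
  -- split the first sum by whether parent = root
  have hsplit : univ.filter (fun v : V => v ≠ root)
      = s ∪ univ.filter (fun u : V => u ≠ root ∧ parent u = root) := by
    ext u; simp only [hs, mem_union, mem_filter, mem_univ, true_and]; tauto
  have hdisj : Disjoint s (univ.filter (fun u : V => u ≠ root ∧ parent u = root)) := by
    rw [Finset.disjoint_left]
    intro u hu hu'
    simp only [hs, mem_filter, mem_univ, true_and] at hu hu'
    exact hu.2 hu'.2
  rw [hsplit, Finset.sum_union hdisj]
  have hrootsum : ∑ u ∈ univ.filter (fun u : V => u ≠ root ∧ parent u = root), P u = 1 := by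
    have hPu : ∀ u ∈ univ.filter (fun u : V => u ≠ root ∧ parent u = root),
        P u = prob root u := by
      intro u hu
      simp only [mem_filter, mem_univ, true_and] at hu
      rw [hstep u hu.1, hu.2, hProot, one_mul]
    rw [Finset.sum_congr rfl hPu]
    have := hsum root
    rw [hnbr_root] at this
    rw [← this]
    apply Finset.sum_congr _ (fun _ _ => rfl)
    ext u; simp only [hC, mem_filter, mem_univ, true_and]; tauto
  rw [hrootsum]
  ring
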